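/- Let X_{t-r'+1},...,X_t be independent random variables and 1 ≤ r < r' ≤ t, and define f = Ĉ^[r] - Ĉ^[r'], the difference of empirical correlation estimates over windows of sizes r and r' ending at t (with labelers mapping to {-1,1}). Then with probability at least 1-δ, |f - E f| ≤ √(2 ln(2/δ)(1 - r/r') / r). -/

import Mathlib

open ProbabilityTheory MeasureTheory Real

/-- Hoeffding's lemma for a two-point ±1 distribution. -/
lemma hoeffding_two_point (p : ℝ) (hp0 : 0 ≤ p) (hp1 : p ≤ 1) (u : ℝ) :
    p * exp (2 * (1 - p) * u) + (1 - p) * exp (-(2 * p) * u) ≤ exp (u ^ 2 / 2) := by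
  rcases hp0.eq_or_lt with h0 | hp0'
  · rw [← h0]
    simp only [zero_mul, sub_zero, neg_zero, zero_mul, exp_zero]
    simpa using one_le_exp (by positivity : (0:ℝ) ≤ u ^ 2 / 2)
  rcases hp1.eq_or_lt with h1 | hp1'
  · rw [h1]
    norm_num
    positivity
  set q : ℝ := 1 - p with hq
  have hq0 : 0 < q := by simp [hq]; linarith
  -- the mgf-like function
  set D : ℝ → ℝ := fun u => p * exp (2 * q * u) + q * exp (-(2 * p) * u) with hD
  have hDpos : ∀ x, 0 < D x := fun x =>
    add_pos (mul_pos hp0' (exp_pos _)) (mul_pos hq0 (exp_pos _))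
  have hexp : ∀ (c x : ℝ), HasDerivAt (fun y => exp (c * y)) (c * exp (c * x)) x := by
    intro c x
    have h1 : HasDerivAt (fun y => c * y) c x := by simpa using (hasDerivAt_id x).const_mul c
    simpa [mul_comm] using h1.exp
  have hDd : ∀ x, HasDerivAt D
      (2 * p * q * (exp (2 * q * x) - exp (-(2 * p) * x))) x := by
    intro x
    have := ((hexp (2 * q) x).const_mul p).add ((hexp (-(2 * p)) x).const_mul q)
    refine this.congr_deriv ?_
    ring
  set N : ℝ → ℝ := fun x => 2 * p * q * (exp (2 * q * x) - exp (-(2 * p) * x)) with hN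
  have hNd : ∀ x, HasDerivAt N
      (2 * p * q * (2 * q * exp (2 * q * x) + 2 * p * exp (-(2 * p) * x))) x := by
    intro x
    have := ((hexp (2 * q) x).sub (hexp (-(2 * p)) x)).const_mul (2 * p * q)
    refine this.congr_deriv ?_
    ring
  -- g via its derivative G
  set G : ℝ → ℝ := fun x => x - N x / D x with hG
  set g : ℝ → ℝ := fun x => x ^ 2 / 2 - log (D x) with hg
  have hgd : ∀ x, HasDerivAt g (G x) x := by
    intro x
    have h1 : HasDerivAt (fun y : ℝ => y ^ 2 / 2) x x := by
      simpa using (hasDerivAt_pow 2 x).div_const 2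
    have h2 : HasDerivAt (fun y => log (D y)) (N x / D x) x := (hDd x).log (hDpos x).ne'
    exact h1.sub h2
  have hGd : ∀ x, HasDerivAt G
      (1 - (2 * p * q * (2 * q * exp (2 * q * x) + 2 * p * exp (-(2 * p) * x)) * D x
        - N x * N x) / D x ^ 2) x := by
    intro x
    exact (hasDerivAt_id x).sub ((hNd x).div (hDd x) (hDpos x).ne')
  have hGd_nonneg : ∀ x, 0 ≤ 1 - (2 * p * q * (2 * q * exp (2 * q * x)
      + 2 * p * exp (-(2 * p) * x)) * D x - N x * N x) / D x ^ 2 := by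
    intro x
    rw [sub_nonneg, div_le_one (by positivity)]
    have ha := exp_pos (2 * q * x)
    have hb := exp_pos (-(2 * p) * x)
    have key : 2 * p * q * (2 * q * exp (2 * q * x) + 2 * p * exp (-(2 * p) * x)) * D x
        - N x * N x = 4 * p * q * (p + q) ^ 2 * (exp (2 * q * x) * exp (-(2 * p) * x)) := by
      simp only [hN, hD]
      ring
    rw [key]
    have hpq : p + q = 1 := by simp [hq]
    rw [hpq]
    simp only [hD]
    nlinarith [sq_nonneg (p * exp (2 * q * x) - q * exp (-(2 * p) * x))]
  have hGmono : Monotone G :=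
    monotone_of_deriv_nonneg (fun x => (hGd x).differentiableAt)
      (fun x => (hGd x).deriv ▸ hGd_nonneg x)
  have hG0 : G 0 = 0 := by simp [hG, hN]
  have hgdiff : Differentiable ℝ g := fun x => (hgd x).differentiableAt
  have hg0 : g 0 = 0 := by simp [hg, hD, hq]
  have hgge : ∀ x, 0 ≤ g x := by
    intro x
    rcases le_total 0 x with hx | hx
    · have : MonotoneOn g (Set.Ici 0) := by
        apply monotoneOn_of_deriv_nonneg (convex_Ici 0) hgdiff.continuous.continuousOn
          (hgdiff.differentiableOn)
        intro y hy
        rw [(hgd y).deriv]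
        rw [interior_Ici] at hy
        have := hGmono (le_of_lt hy)
        rw [hG0] at this
        exact this
      have := this (Set.self_mem_Ici) (Set.mem_Ici.2 hx) hx
      rwa [hg0] at this
    · have : AntitoneOn g (Set.Iic 0) := by
        apply antitoneOn_of_deriv_nonpos (convex_Iic 0) hgdiff.continuous.continuousOn
          (hgdiff.differentiableOn)
        intro y hy
        rw [(hgd y).deriv]
        rw [interior_Iic] at hy
        have := hGmono (le_of_lt hy)
        rw [hG0] at this
        exact this
      have := this (Set.mem_Iic.2 hx) (Set.self_mem_Iic) hx
      rwa [hg0] at this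
  have hkey : D u ≤ exp (u ^ 2 / 2) := by
    have h := hgge u
    have : log (D u) ≤ u ^ 2 / 2 := by simp only [hg] at h; linarith
    calc D u = exp (log (D u)) := (exp_log (hDpos u)).symm
    _ ≤ exp (u ^ 2 / 2) := exp_le_exp.2 this
  simpa [hD, hq] using hkey

section TwoPoint
variable {Ω : Type*} [MeasureSpace Ω] [IsProbabilityMeasure (ℙ : Measure Ω)]

lemma integrable_of_two_values {g : Ω → ℝ} (hg : Measurable g) {v1 v2 : ℝ}
    (h : ∀ ω, g ω = v1 ∨ g ω = v2) : Integrable g ℙ := by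
  refine Integrable.mono' (integrable_const (max |v1| |v2|)) hg.aestronglyMeasurable ?_
  filter_upwards with ω
  rw [Real.norm_eq_abs]
  rcases h ω with h | h <;> rw [h]
  · exact le_max_left _ _
  · exact le_max_right _ _

lemma integral_two_point {Y : Ω → ℝ} (hY : Measurable Y)
    (hv : ∀ ω, Y ω = 1 ∨ Y ω = -1) (F : ℝ → ℝ) :
    ∫ ω, F (Y ω) ∂ℙ
      = (ℙ (Y ⁻¹' {1})).toReal * F 1 + (1 - (ℙ (Y ⁻¹' {1})).toReal) * F (-1) := by
  set A : Set Ω := Y ⁻¹' {1} with hA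
  have hAm : MeasurableSet A := hY (measurableSet_singleton 1)
  have hrepr : (fun ω => F (Y ω))
      = fun ω => A.indicator (fun _ => F 1 - F (-1)) ω + F (-1) := by
    funext ω
    rcases hv ω with h | h
    · have : ω ∈ A := by simp [hA, h]
      simp [Set.indicator_of_mem this, h]
    · have : ω ∉ A := by simp [hA, h]; norm_num
      simp [Set.indicator_of_notMem this, h]
  rw [hrepr, integral_add ((integrable_const _).indicator hAm) (integrable_const _),
    integral_indicator_const _ hAm, integral_const]
  simp only [measureReal_def, measure_univ, ENNReal.toReal_one, one_smul, smul_eq_mul]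
  ring

lemma mgf_two_point {Y : Ω → ℝ} (hY : Measurable Y)
    (hv : ∀ ω, Y ω = 1 ∨ Y ω = -1) (c t : ℝ) :
    mgf (fun ω => c * (Y ω - ∫ ω', Y ω' ∂ℙ)) ℙ t ≤ exp (t ^ 2 * c ^ 2 / 2) := by
  set p : ℝ := (ℙ (Y ⁻¹' {1})).toReal with hp
  have hp0 : 0 ≤ p := ENNReal.toReal_nonneg
  have hp1 : p ≤ 1 := by
    rw [hp]
    exact ENNReal.toReal_le_of_le_ofReal one_pos.le (by simpa using prob_le_one)
  have hm : ∫ ω', Y ω' ∂ℙ = 2 * p - 1 := by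
    have := integral_two_point hY hv id
    simp only [id] at this
    rw [this]; ring
  set m : ℝ := 2 * p - 1 with hmdef
  have hcalc : mgf (fun ω => c * (Y ω - ∫ ω', Y ω' ∂ℙ)) ℙ t
      = p * exp (t * c * (1 - m)) + (1 - p) * exp (t * c * (-1 - m)) := by
    rw [mgf]
    have := integral_two_point hY hv (fun y => exp (t * (c * (y - m))))
    simp only [hm]
    rw [show (fun ω => exp (t * (c * (Y ω - m)))) = fun ω =>
        (fun y => exp (t * (c * (y - m)))) (Y ω) from rfl] at this
    rw [this, ← hp]
    ring_nf
  rw [hcalc]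
  have key := hoeffding_two_point p hp0 hp1 (t * c)
  have h1 : t * c * (1 - m) = 2 * (1 - p) * (t * c) := by rw [hmdef]; ring
  have h2 : t * c * (-1 - m) = -(2 * p) * (t * c) := by rw [hmdef]; ring
  rw [h1, h2]
  refine key.trans (exp_le_exp.2 (le_of_eq ?_))
  ring

end TwoPoint

section Tail
variable {Ω ι : Type*} [MeasureSpace Ω] [IsProbabilityMeasure (ℙ : Measure Ω)]

/-- One-sided Chernoff–Hoeffding tail bound for a weighted sum of independent
±1-valued random variables. -/
lemma weighted_tail (S : Finset ι) (Z : ι → Ω → ℝ) (hZm : ∀ k, Measurable (Z k))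
    (hZv : ∀ k ω, Z k ω = 1 ∨ Z k ω = -1)
    (hind : ProbabilityTheory.iIndepFun Z ℙ)
    (c : ι → ℝ) (ε V : ℝ) (hV : 0 < V) (hVe : ∑ k ∈ S, (c k) ^ 2 ≤ V) (hε : 0 < ε) :
    (ℙ {ω | ε ≤ ∑ k ∈ S, c k * (Z k ω - ∫ ω', Z k ω' ∂ℙ)}).toReal
      ≤ exp (-ε ^ 2 / (2 * V)) := by
  classical
  set m : ι → ℝ := fun k => ∫ ω', Z k ω' ∂ℙ with hm
  set Y : ι → Ω → ℝ := fun k ω => c k * (Z k ω - m k) with hY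
  have hYm : ∀ k, Measurable (Y k) := fun k => ((hZm k).sub_const _).const_mul _
  have hYind : ProbabilityTheory.iIndepFun Y ℙ := by
    have := hind.comp (fun k => fun x : ℝ => c k * (x - m k))
      (fun k => (measurable_id.sub_const _).const_mul _)
    exact this
  have hYv : ∀ k ω, Y k ω = c k * (1 - m k) ∨ Y k ω = c k * (-1 - m k) := by
    intro k ω
    rcases hZv k ω with h | h
    · left; rw [hY]; simp [h]
    · right; rw [hY]; simp [h]
  set lam : ℝ := ε / V with hlam
  have hlam0 : 0 < lam := div_pos hε hV
  have hint : ∀ k, Integrable (fun ω => exp (lam * Y k ω)) ℙ := by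
    intro k
    apply integrable_of_two_values (((hYm k).const_mul lam).exp)
      (v1 := exp (lam * (c k * (1 - m k)))) (v2 := exp (lam * (c k * (-1 - m k))))
    intro ω
    rcases hYv k ω with h | h
    · left; rw [h]
    · right; rw [h]
  have hWint : Integrable (fun ω => exp (lam * (∑ k ∈ S, Y k) ω)) ℙ :=
    hYind.integrable_exp_mul_sum hYm (fun k _ => hint k)
  have hset : {ω | ε ≤ ∑ k ∈ S, c k * (Z k ω - ∫ ω', Z k ω' ∂ℙ)}
      = {ω | ε ≤ (∑ k ∈ S, Y k) ω} := by
    ext ω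
    simp [hY, hm]
  rw [hset]
  have hch := measure_ge_le_exp_mul_mgf (μ := ℙ) (X := ∑ k ∈ S, Y k) ε hlam0.le hWint
  refine hch.trans ?_
  have hprod : mgf (∑ k ∈ S, Y k) ℙ lam = ∏ k ∈ S, mgf (Y k) ℙ lam :=
    hYind.mgf_sum hYm S
  have hbound : ∏ k ∈ S, mgf (Y k) ℙ lam ≤ exp (lam ^ 2 * V / 2) := by
    have h1 : ∏ k ∈ S, mgf (Y k) ℙ lam ≤ ∏ k ∈ S, exp (lam ^ 2 * (c k) ^ 2 / 2) := by
      refine Finset.prod_le_prod (fun k _ => mgf_nonneg) (fun k _ => ?_)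
      exact mgf_two_point (hZm k) (hZv k) (c k) lam
    refine h1.trans ?_
    rw [← Real.exp_sum]
    apply exp_le_exp.2
    calc ∑ k ∈ S, lam ^ 2 * (c k) ^ 2 / 2 = lam ^ 2 * (∑ k ∈ S, (c k) ^ 2) / 2 := by
          rw [Finset.mul_sum, Finset.sum_div]
      _ ≤ lam ^ 2 * V / 2 := by
          have : (0:ℝ) ≤ lam ^ 2 := sq_nonneg _
          gcongr
  calc exp (-lam * ε) * mgf (∑ k ∈ S, Y k) ℙ lam
      ≤ exp (-lam * ε) * exp (lam ^ 2 * V / 2) := by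
        rw [hprod]; exact mul_le_mul_of_nonneg_left hbound (exp_pos _).le
    _ = exp (-lam * ε + lam ^ 2 * V / 2) := (Real.exp_add _ _).symm
    _ ≤ exp (-ε ^ 2 / (2 * V)) := by
        apply exp_le_exp.2
        rw [hlam]
        rw [show -(ε / V) * ε + (ε / V) ^ 2 * V / 2 = -ε ^ 2 / (2 * V) by
          field_simp; ring]
end Tail

/-- McDiarmid bound for the difference of empirical correlation estimates over
nested windows of sizes `r < r'` ending at time `t`: with probability at least
`1 - δ`, the difference is within `√(2 ln(2/δ)(1 - r/r')/r)` of its expectation. -/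
theorem window_difference_concentration {Ω α : Type*} [MeasureSpace Ω]
    [IsProbabilityMeasure (ℙ : Measure Ω)] [MeasurableSpace α]
    (t r r' : ℕ) (hr : 1 ≤ r) (hrr : r < r') (hrt : r' ≤ t)
    (X : ℕ → Ω → α) (hmeas : ∀ k, Measurable (X k))
    (hindep : iIndepFun X ℙ)
    (ℓi ℓj : α → ℝ) (hℓi : Measurable ℓi) (hℓj : Measurable ℓj)
    (hvi : ∀ x, ℓi x = 1 ∨ ℓi x = -1) (hvj : ∀ x, ℓj x = 1 ∨ ℓj x = -1)
    (δ : ℝ) (hδ : δ ∈ Set.Ioo (0:ℝ) 1)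
    (f : Ω → ℝ)
    (hf : ∀ ω, f ω =
      (1 / (r:ℝ)) * ∑ k ∈ Finset.Ioc (t - r) t, ℓi (X k ω) * ℓj (X k ω)
        - (1 / (r':ℝ)) * ∑ k ∈ Finset.Ioc (t - r') t, ℓi (X k ω) * ℓj (X k ω)) :
    ENNReal.ofReal (1 - δ)
      ≤ ℙ {ω | |f ω - ∫ ω', f ω' ∂ℙ|
          ≤ Real.sqrt (2 * Real.log (2 / δ) * (1 - (r:ℝ) / r') / r)} := by
  classical
  -- basic positivity facts
  have hr0 : (0:ℝ) < r := by exact_mod_cast Nat.lt_of_lt_of_le Nat.zero_lt_one hr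
  have hr'0 : (0:ℝ) < r' := by
    have : (0:ℕ) < r' := lt_of_lt_of_le (Nat.lt_of_lt_of_le Nat.zero_lt_one hr) hrr.le
    exact_mod_cast this
  have hrr'R : (r:ℝ) < r' := by exact_mod_cast hrr
  -- windows
  set S : Finset ℕ := Finset.Ioc (t - r') t with hS
  set R : Finset ℕ := Finset.Ioc (t - r) t with hR
  have hRS : R ⊆ S := by
    rw [hR, hS]
    exact Finset.Ioc_subset_Ioc (Nat.sub_le_sub_left hrr.le t) le_rfl
  have hcardS : S.card = r' := by rw [hS, Nat.card_Ioc, Nat.sub_sub_self hrt]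
  have hcardR : R.card = r := by
    rw [hR, Nat.card_Ioc, Nat.sub_sub_self (le_trans hrr.le hrt)]
  have hcardSR : (S \ R).card = r' - r := by rw [Finset.card_sdiff_of_subset hRS, hcardS, hcardR]
  -- random signs
  set Z : ℕ → Ω → ℝ := fun k ω => ℓi (X k ω) * ℓj (X k ω) with hZ
  have hZmeas : ∀ k, Measurable (Z k) := fun k =>
    (hℓi.comp (hmeas k)).mul (hℓj.comp (hmeas k))
  have hZv : ∀ k ω, Z k ω = 1 ∨ Z k ω = -1 := by
    intro k ω
    rcases hvi (X k ω) with h1 | h1 <;> rcases hvj (X k ω) with h2 | h2 <;>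
      simp [hZ, h1, h2]
  have hZind : iIndepFun Z ℙ :=
    hindep.comp (fun _ x => ℓi x * ℓj x) (fun _ => hℓi.mul hℓj)
  have hZint : ∀ k, Integrable (Z k) ℙ := fun k =>
    integrable_of_two_values (hZmeas k) (hZv k)
  -- weights
  set c : ℕ → ℝ := fun k => if k ∈ R then 1/(r:ℝ) - 1/(r':ℝ) else -(1/(r':ℝ)) with hc
  -- the key pointwise identity
  have hfW : ∀ ω, f ω = ∑ k ∈ S, c k * Z k ω := by
    intro ω
    have e1 : ∑ k ∈ S, c k * Z k ω
        = ∑ k ∈ S \ R, (-(1/(r':ℝ))) * Z k ω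
          + ∑ k ∈ R, (1/(r:ℝ) - 1/(r':ℝ)) * Z k ω := by
      rw [← Finset.sum_sdiff hRS]
      congr 1
      · exact Finset.sum_congr rfl fun k hk => by
          simp only [hc, if_neg (Finset.mem_sdiff.1 hk).2]
      · exact Finset.sum_congr rfl fun k hk => by simp only [hc, if_pos hk]
    have e2 : ∑ k ∈ S, Z k ω = ∑ k ∈ S \ R, Z k ω + ∑ k ∈ R, Z k ω :=
      (Finset.sum_sdiff hRS).symm
    rw [hf ω, e1]
    have e3 : (∑ k ∈ Finset.Ioc (t - r') t, ℓi (X k ω) * ℓj (X k ω)) = ∑ k ∈ S, Z k ω := rfl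
    have e4 : (∑ k ∈ Finset.Ioc (t - r) t, ℓi (X k ω) * ℓj (X k ω)) = ∑ k ∈ R, Z k ω := rfl
    rw [e3, e4, e2, ← Finset.mul_sum, ← Finset.mul_sum]
    ring
  have hEf : ∫ ω', f ω' ∂ℙ = ∑ k ∈ S, c k * ∫ ω', Z k ω' ∂ℙ := by
    have hfe : f = fun ω => ∑ k ∈ S, c k * Z k ω := funext hfW
    rw [hfe, integral_finset_sum S (fun k _ => (hZint k).const_mul (c k))]
    exact Finset.sum_congr rfl fun k _ => integral_const_mul _ _
  have hdiff : ∀ ω, f ω - ∫ ω', f ω' ∂ℙ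
      = ∑ k ∈ S, c k * (Z k ω - ∫ ω', Z k ω' ∂ℙ) := by
    intro ω
    rw [hfW ω, hEf, ← Finset.sum_sub_distrib]
    exact Finset.sum_congr rfl fun k _ => by ring
  -- variance proxy
  set V : ℝ := 1/(r:ℝ) - 1/(r':ℝ) with hV
  have hVpos : 0 < V := by
    rw [hV, sub_pos]
    exact one_div_lt_one_div_of_lt hr0 hrr'R
  have hVsum : ∑ k ∈ S, (c k) ^ 2 = V := by
    have hsq : ∀ k, (c k) ^ 2
        = if k ∈ R then (1/(r:ℝ) - 1/(r':ℝ)) ^ 2 else (1/(r':ℝ)) ^ 2 := by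
      intro k
      simp only [hc]
      split_ifs <;> ring
    have e5 : ∑ k ∈ S \ R, (c k) ^ 2 = ∑ _k ∈ S \ R, (1/(r':ℝ)) ^ 2 :=
      Finset.sum_congr rfl fun k hk => by
        rw [hsq k, if_neg (Finset.mem_sdiff.1 hk).2]
    have e6 : ∑ k ∈ R, (c k) ^ 2 = ∑ _k ∈ R, (1/(r:ℝ) - 1/(r':ℝ)) ^ 2 :=
      Finset.sum_congr rfl fun k hk => by rw [hsq k, if_pos hk]
    calc ∑ k ∈ S, (c k) ^ 2
        = ∑ k ∈ S \ R, (c k) ^ 2 + ∑ k ∈ R, (c k) ^ 2 := (Finset.sum_sdiff hRS).symm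
      _ = ((r':ℝ) - r) * (1/(r':ℝ)) ^ 2 + (r:ℝ) * (1/(r:ℝ) - 1/(r':ℝ)) ^ 2 := by
          rw [e5, e6, Finset.sum_const, Finset.sum_const, hcardSR, hcardR,
            nsmul_eq_mul, nsmul_eq_mul, Nat.cast_sub hrr.le]
      _ = V := by rw [hV]; field_simp; ring
  -- the deviation level
  set L : ℝ := Real.log (2 / δ) with hL
  have hLpos : 0 < L := by
    rw [hL]
    apply Real.log_pos
    rw [lt_div_iff₀ hδ.1]
    linarith [hδ.2]
  set E : ℝ := Real.sqrt (2 * Real.log (2 / δ) * (1 - (r:ℝ) / r') / r) with hE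
  have harg : 2 * Real.log (2 / δ) * (1 - (r:ℝ) / r') / r = 2 * L * V := by
    rw [hL, hV]; field_simp
  have hargpos : 0 < 2 * L * V := mul_pos (mul_pos two_pos hLpos) hVpos
  have hEpos : 0 < E := by rw [hE, harg]; exact Real.sqrt_pos.2 hargpos
  have hE2 : E ^ 2 = 2 * L * V := by rw [hE, harg]; exact Real.sq_sqrt hargpos.le
  -- tail bounds
  have hexpδ : exp (-E ^ 2 / (2 * V)) = δ / 2 := by
    have h1 : -E ^ 2 / (2 * V) = -L := by rw [hE2]; field_simp [hVpos.ne']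
    rw [h1, Real.exp_neg, hL, Real.exp_log (div_pos two_pos hδ.1), inv_div]
  have hup := weighted_tail S Z hZmeas hZv hZind c E V hVpos (le_of_eq hVsum) hEpos
  have hlo := weighted_tail S Z hZmeas hZv hZind (fun k => -c k) E V hVpos
    (by simpa [neg_sq] using le_of_eq hVsum) hEpos
  rw [hexpδ] at hup hlo
  -- the good event
  have hfm : Measurable f := by
    have hfe : f = fun ω => (1/(r:ℝ)) * ∑ k ∈ R, Z k ω - (1/(r':ℝ)) * ∑ k ∈ S, Z k ω := by
      funext ω; exact hf ω
    rw [hfe]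
    exact ((Finset.measurable_sum R fun k _ => hZmeas k).const_mul _).sub
      ((Finset.measurable_sum S fun k _ => hZmeas k).const_mul _)
  set Good : Set Ω := {ω | |f ω - ∫ ω', f ω' ∂ℙ| ≤ E} with hGood
  have hGoodm : MeasurableSet Good :=
    measurableSet_le ((hfm.sub_const _).abs) measurable_const
  have hsub : Goodᶜ ⊆ {ω | E ≤ ∑ k ∈ S, c k * (Z k ω - ∫ ω', Z k ω' ∂ℙ)}
      ∪ {ω | E ≤ ∑ k ∈ S, (fun k => -c k) k * (Z k ω - ∫ ω', Z k ω' ∂ℙ)} := by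
    intro ω hω
    simp only [hGood, Set.mem_compl_iff, Set.mem_setOf_eq, not_le] at hω
    rw [hdiff ω] at hω
    rcases lt_abs.1 hω with h | h
    · left; exact h.le
    · right
      have hneg : ∑ k ∈ S, (fun k => -c k) k * (Z k ω - ∫ ω', Z k ω' ∂ℙ)
          = -∑ k ∈ S, c k * (Z k ω - ∫ ω', Z k ω' ∂ℙ) := by
        rw [← Finset.sum_neg_distrib]
        exact Finset.sum_congr rfl fun k _ => by ring
      rw [Set.mem_setOf_eq, hneg]
      exact h.le
  have hcompl : (ℙ Goodᶜ).toReal ≤ δ := by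
    have h1 : ℙ Goodᶜ
        ≤ ℙ {ω | E ≤ ∑ k ∈ S, c k * (Z k ω - ∫ ω', Z k ω' ∂ℙ)}
          + ℙ {ω | E ≤ ∑ k ∈ S, (fun k => -c k) k * (Z k ω - ∫ ω', Z k ω' ∂ℙ)} :=
      (measure_mono hsub).trans (measure_union_le _ _)
    have h2 := ENNReal.toReal_mono
      (ENNReal.add_ne_top.2 ⟨measure_ne_top _ _, measure_ne_top _ _⟩) h1
    rw [ENNReal.toReal_add (measure_ne_top _ _) (measure_ne_top _ _)] at h2
    linarith [hup, hlo, h2]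
  have hsum1 : (ℙ Good).toReal + (ℙ Goodᶜ).toReal = 1 := by
    rw [← ENNReal.toReal_add (measure_ne_top _ _) (measure_ne_top _ _),
      measure_add_measure_compl hGoodm, measure_univ, ENNReal.toReal_one]
  exact ENNReal.ofReal_le_of_le_toReal (by linarith)
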